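/- arXiv:1102.0690 — 4 statements merged into one kernel-verified Lean document; each statement's English description precedes it below -/
import Mathlib

section
/- For every real t ≥ 1 and every real r with 0 ≤ r < 1, one has (t − r)/(1 − r²) ≥ (t + √(t² − 1))/2. -/
/-! With `s = √(t² - 1)` we have `(t + s)(t - s) = 1`, and the gap between the two sides, cleared of
denominators, is the perfect square `(t + s)(r - (t - s))²`; the minimum over `r` is attained at
`r = t - s`. -/

lemma two_mul_sub_sub_mul_one_sub_sq {t s : ℝ} (h : t ^ 2 - s ^ 2 = 1) (r : ℝ) :
    2 * (t - r) - (t + s) * (1 - r ^ 2) = (t + s) * (r - (t - s)) ^ 2 := by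
  linear_combination (2 * r - (t - s)) * h

lemma add_div_two_le_sub_div_one_sub_sq {t s r : ℝ} (h : t ^ 2 - s ^ 2 = 1) (hts : 0 ≤ t + s)
    (hr : |r| < 1) : (t + s) / 2 ≤ (t - r) / (1 - r ^ 2) := by
  have hden : 0 < 1 - r ^ 2 := by
    rw [sub_pos, ← sq_abs]
    exact pow_lt_one₀ (abs_nonneg r) hr two_ne_zero
  rw [div_le_div_iff₀ two_pos hden]
  linarith [two_mul_sub_sub_mul_one_sub_sq h r, mul_nonneg hts (sq_nonneg (r - (t - s)))]

theorem stmt_1 (t r : ℝ) (ht : 1 ≤ t) (hr0 : 0 ≤ r) (hr1 : r < 1) :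
    (t - r) / (1 - r ^ 2) ≥ (t + Real.sqrt (t ^ 2 - 1)) / 2 := by
  have hsq : t ^ 2 - Real.sqrt (t ^ 2 - 1) ^ 2 = 1 := by
    rw [Real.sq_sqrt (by nlinarith)]
    ring
  have hts : 0 ≤ t + Real.sqrt (t ^ 2 - 1) := by positivity
  exact add_div_two_le_sub_div_one_sub_sq hsq hts (abs_lt.mpr ⟨by linarith, hr1⟩)
end

section
/- Let c1, c2 be vectors in ℂ^n with ⟨c1,c2⟩ ≠ 0, let s := |⟨c1,c2⟩|, and let t := ((1+‖c1‖²)(1+‖c2‖²) − s² − 1)/(2s). Then for every complex number ρ with |ρ| < 1, (1 + ‖c1‖² − |⟨c1,c2⟩ + ρ|²/(1 + ‖c2‖²))/(1 − |ρ|²) ≥ (1 + s·(t + √(t² − 1)))/(1 + ‖c2‖²). -/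
/-!
Write `a = (1 + ‖c1‖²)(1 + ‖c2‖²)`, `r = |ρ|` and `u = t + √(t² - 1)`, so that `u + u⁻¹ = 2t` and
`a = 1 + s (u + u⁻¹) + s²`. Since `|⟨c1,c2⟩ + ρ| ≤ s + r`, clearing denominators reduces the claim to
`(1 + s u)(1 - r²) ≤ a - (s + r)²`, and the difference of the two sides is `s (1 - u r)² / u ≥ 0`.
-/

lemma two_mul_le_one_add_sq_mul_one_add_sq {x y s : ℝ} (hs₀ : 0 ≤ s) (hs : s ≤ x * y) :
    2 * s ≤ (1 + x ^ 2) * (1 + y ^ 2) - s ^ 2 - 1 := by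
  nlinarith [sq_nonneg (x - y), mul_self_le_mul_self hs₀ hs]

lemma add_sqrt_sq_sub_one_add_inv {t : ℝ} (ht : 1 ≤ t) :
    (t + √(t ^ 2 - 1)) + (t + √(t ^ 2 - 1))⁻¹ = 2 * t := by
  have hsq : √(t ^ 2 - 1) ^ 2 = t ^ 2 - 1 := Real.sq_sqrt (by nlinarith)
  have hinv : (t + √(t ^ 2 - 1))⁻¹ = t - √(t ^ 2 - 1) :=
    inv_eq_of_mul_eq_one_right (by nlinarith)
  rw [hinv]
  ring

lemma one_add_mul_mul_one_sub_sq_le {s u : ℝ} (hs : 0 ≤ s) (hu : 0 < u) (r : ℝ) :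
    (1 + s * u) * (1 - r ^ 2) ≤ 1 + s * (u + u⁻¹) + s ^ 2 - (s + r) ^ 2 := by
  have hdiff : 1 + s * (u + u⁻¹) + s ^ 2 - (s + r) ^ 2 - (1 + s * u) * (1 - r ^ 2) =
      s * (1 - u * r) ^ 2 / u := by
    field_simp
    ring
  have : 0 ≤ s * (1 - u * r) ^ 2 / u := by positivity
  linarith

theorem stmt_5 (n : ℕ) (c1 c2 : EuclideanSpace ℂ (Fin n))
    (h : (inner ℂ c1 c2 : ℂ) ≠ 0)
    (s : ℝ) (hs : s = ‖(inner ℂ c1 c2 : ℂ)‖)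
    (t : ℝ) (ht : t = ((1 + ‖c1‖ ^ 2) * (1 + ‖c2‖ ^ 2) - s ^ 2 - 1) / (2 * s))
    (ρ : ℂ) (hρ : ‖ρ‖ < 1) :
    (1 + ‖c1‖ ^ 2 - ‖(inner ℂ c1 c2 : ℂ) + ρ‖ ^ 2 / (1 + ‖c2‖ ^ 2)) / (1 - ‖ρ‖ ^ 2) ≥
      (1 + s * (t + Real.sqrt (t ^ 2 - 1))) / (1 + ‖c2‖ ^ 2) := by
  have hs₀ : 0 < s := hs ▸ norm_pos_iff.mpr h
  have hb : 0 < 1 + ‖c2‖ ^ 2 := by positivity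
  have hr : 0 < 1 - ‖ρ‖ ^ 2 := by nlinarith [norm_nonneg ρ]
  have h2st : 2 * s * t = (1 + ‖c1‖ ^ 2) * (1 + ‖c2‖ ^ 2) - s ^ 2 - 1 := by
    rw [ht]; field_simp
  have ht₁ : 1 ≤ t := by
    rw [ht, le_div_iff₀ (by positivity), one_mul]
    exact two_mul_le_one_add_sq_mul_one_add_sq hs₀.le (hs ▸ norm_inner_le_norm c1 c2)
  have hnorm : ‖(inner ℂ c1 c2 : ℂ) + ρ‖ ^ 2 ≤ (s + ‖ρ‖) ^ 2 :=
    pow_le_pow_left₀ (norm_nonneg _) (hs ▸ norm_add_le _ _) 2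
  have key := one_add_mul_mul_one_sub_sq_le hs₀.le
    (by positivity : 0 < t + √(t ^ 2 - 1)) ‖ρ‖
  rw [add_sqrt_sq_sub_one_add_inv ht₁] at key
  rw [ge_iff_le, div_le_div_iff₀ hb hr, sub_mul, div_mul_cancel₀ _ hb.ne']
  linarith
end

section
/- Let c1, c2 be vectors in ℂ^n with ⟨c1,c2⟩ ≠ 0, let s := |⟨c1,c2⟩|, and let t := ((1+‖c1‖²)(1+‖c2‖²) − s² − 1)/(2s). Assume t > 1, and set ρ_opt := (t − √(t² − 1))·⟨c1,c2⟩/|⟨c1,c2⟩|. Then |ρ_opt| < 1 and (1 + ‖c1‖² − |⟨c1,c2⟩ + ρ_opt|²/(1 + ‖c2‖²))/(1 − |ρ_opt|²) = (1 + s·(t + √(t² − 1)))/(1 + ‖c2‖²). -/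
/-!
With `z = ⟨c1, c2⟩`, `s = |z|` and `r = t - √(t² - 1)`, the number `r` is the root of
`r² - 2 t r + 1 = 0` lying in `(0, 1)`, and its companion root is `1 / r = t + √(t² - 1)`.
Since `ρ_opt = r · z / |z|` points in the direction of `z`, we get `|ρ_opt| = r` and
`|z + ρ_opt| = s + r`. By definition of `t`, `(1 + ‖c1‖²)(1 + ‖c2‖²) = 2 s t + s² + 1`, and the
quadratic relation for `r` turns the value of the objective into `(1 + s / r) / (1 + ‖c2‖²)`.
-/

namespace Real

lemma sub_sqrt_sq_sub_one_pos {t : ℝ} (ht : 1 ≤ t) : 0 < t - √(t ^ 2 - 1) := by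
  have hsq : √(t ^ 2 - 1) ^ 2 = t ^ 2 - 1 := sq_sqrt (by nlinarith)
  nlinarith [sqrt_nonneg (t ^ 2 - 1)]

lemma sub_sqrt_sq_sub_one_lt_one {t : ℝ} (ht : 1 < t) : t - √(t ^ 2 - 1) < 1 := by
  have hsq : √(t ^ 2 - 1) ^ 2 = t ^ 2 - 1 := sq_sqrt (by nlinarith)
  nlinarith [sqrt_nonneg (t ^ 2 - 1)]

end Real

lemma Complex.norm_ofReal_mul_div_norm {z : ℂ} (hz : z ≠ 0) (r : ℝ) :
    ‖(r : ℂ) * z / (‖z‖ : ℂ)‖ = |r| := by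
  have hz' : ‖z‖ ≠ 0 := norm_ne_zero_iff.mpr hz
  rw [norm_div, norm_mul, Complex.norm_real, Complex.norm_real, norm_norm, Real.norm_eq_abs,
    mul_div_assoc, div_self hz', mul_one]

lemma objective_eq_of_sq_eq {a b s t u : ℝ} (hb : b ≠ 0) (hu : u ^ 2 = t ^ 2 - 1)
    (hr : 1 - (t - u) ^ 2 ≠ 0) (hab : a * b = 2 * s * t + s ^ 2 + 1) :
    (a - (s + (t - u)) ^ 2 / b) / (1 - (t - u) ^ 2) = (1 + s * (t + u)) / b := by
  rw [div_eq_div_iff hr hb, sub_mul, div_mul_cancel₀ _ hb]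
  linear_combination hab - s * (t - u) * hu

theorem stmt_6 (n : ℕ) (c1 c2 : EuclideanSpace ℂ (Fin n))
    (h : (inner ℂ c1 c2 : ℂ) ≠ 0)
    (s : ℝ) (hs : s = ‖(inner ℂ c1 c2 : ℂ)‖)
    (t : ℝ) (ht : t = ((1 + ‖c1‖ ^ 2) * (1 + ‖c2‖ ^ 2) - s ^ 2 - 1) / (2 * s))
    (ht1 : 1 < t)
    (ρopt : ℂ)
    (hρopt : ρopt = ((t - Real.sqrt (t ^ 2 - 1)) : ℂ) *
      (inner ℂ c1 c2 : ℂ) / (‖(inner ℂ c1 c2 : ℂ)‖ : ℂ)) :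
    ‖ρopt‖ < 1 ∧
    (1 + ‖c1‖ ^ 2 - ‖(inner ℂ c1 c2 : ℂ) + ρopt‖ ^ 2 / (1 + ‖c2‖ ^ 2)) / (1 - ‖ρopt‖ ^ 2) =
      (1 + s * (t + Real.sqrt (t ^ 2 - 1))) / (1 + ‖c2‖ ^ 2) := by
  set z : ℂ := inner ℂ c1 c2
  set r := t - √(t ^ 2 - 1) with hr
  have hs0 : 0 < s := hs ▸ norm_pos_iff.mpr h
  have hr0 : 0 < r := Real.sub_sqrt_sq_sub_one_pos ht1.le
  have hr1 : r < 1 := Real.sub_sqrt_sq_sub_one_lt_one ht1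
  have hρ : ‖ρopt‖ = r := by
    rw [hρopt, ← Complex.ofReal_sub, Complex.norm_ofReal_mul_div_norm h, abs_of_pos hr0]
  have hzρ : ‖z + ρopt‖ = s + r := by
    have hz' : (‖z‖ : ℂ) ≠ 0 := by exact_mod_cast norm_ne_zero_iff.mpr h
    have : z + ρopt = ((‖z‖ + r : ℝ) : ℂ) * z / (‖z‖ : ℂ) := by
      rw [hρopt, hr]; push_cast; field_simp
    rw [this, Complex.norm_ofReal_mul_div_norm h, ← hs, abs_of_pos (by positivity)]
  refine ⟨hρ ▸ hr1, ?_⟩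
  rw [hρ, hzρ]
  refine objective_eq_of_sq_eq (by positivity) (Real.sq_sqrt (by nlinarith)) (by nlinarith) ?_
  rw [ht]
  field_simp
  ring
end

section
/- Let c1, c2 be vectors in ℂ^n with ⟨c1,c2⟩ ≠ 0, let s := |⟨c1,c2⟩|, and let t := ((1+‖c1‖²)(1+‖c2‖²) − s² − 1)/(2s). Assume t > 1. Then the set { (1 + ‖c1‖² − |⟨c1,c2⟩ + ρ|²/(1 + ‖c2‖²))/(1 − |ρ|²) : ρ ∈ ℂ, |ρ| < 1 } has least element (1 + s·(t + √(t² − 1)))/(1 + ‖c2‖²). -/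
/-!
Write `s = |⟨c1,c2⟩|`, `r = |ρ|` and `q = √(t² - 1)`, so that `(t + q)(t - q) = 1` and
`(1 + ‖c1‖²)(1 + ‖c2‖²) = 2st + s² + 1`. Since `|⟨c1,c2⟩ + ρ| ≤ s + r`, the objective times
`1 + ‖c2‖²` is at least `1 + 2s(t - r)/(1 - r²)`, and
`2(t - r) - (1 - r²)(t + q) = (t - q)((t + q)r - 1)² ≥ 0`.
Both bounds are attained at `ρ = (t - q)/s · ⟨c1,c2⟩`.
-/

open Metric

lemma add_sqrt_sq_sub_one_mul_sub {t : ℝ} (ht : 1 ≤ t) :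
    (t + √(t ^ 2 - 1)) * (t - √(t ^ 2 - 1)) = 1 := by
  linear_combination -Real.sq_sqrt (by nlinarith : (0 : ℝ) ≤ t ^ 2 - 1)

lemma two_mul_sub_sub_one_sub_sq_mul {t q : ℝ} (hq : (t + q) * (t - q) = 1) (r : ℝ) :
    2 * (t - r) - (1 - r ^ 2) * (t + q) = (t - q) * ((t + q) * r - 1) ^ 2 := by
  linear_combination (2 * r - (t + q) * r ^ 2) * hq

lemma norm_add_smul_self {E : Type*} [SeminormedAddCommGroup E] [NormedSpace ℝ E] (w : E)
    {c : ℝ} (hc : 0 ≤ c) : ‖w + c • w‖ = (1 + c) * ‖w‖ := by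
  rw [← Real.norm_of_nonneg (by positivity : 0 ≤ 1 + c), ← norm_smul, add_smul, one_smul]

theorem isLeast_sub_norm_add_sq_div_one_sub_norm_sq {E : Type*} [NormedAddCommGroup E]
    [NormedSpace ℝ E] {w : E} (hw : w ≠ 0) {t : ℝ} (ht : 1 < t) :
    IsLeast ((fun ρ : E ↦ (2 * ‖w‖ * t + ‖w‖ ^ 2 + 1 - ‖w + ρ‖ ^ 2) / (1 - ‖ρ‖ ^ 2)) '' ball 0 1)
      (1 + ‖w‖ * (t + √(t ^ 2 - 1))) := by
  set s := ‖w‖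
  set q := √(t ^ 2 - 1)
  have hs : 0 < s := norm_pos_iff.mpr hw
  have hq : (t + q) * (t - q) = 1 := add_sqrt_sq_sub_one_mul_sub ht.le
  have hqt : 0 < t - q := by nlinarith [Real.sqrt_nonneg (t ^ 2 - 1)]
  have hq1 : t - q < 1 := by nlinarith [Real.sqrt_nonneg (t ^ 2 - 1)]
  constructor
  · have hnorm : ‖((t - q) / s) • w‖ = t - q := by
      rw [norm_smul, Real.norm_of_nonneg (by positivity), div_mul_cancel₀ _ hs.ne']
    refine ⟨((t - q) / s) • w, by rwa [mem_ball_zero_iff, hnorm], ?_⟩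
    have hsum : ‖w + ((t - q) / s) • w‖ = s + (t - q) := by
      rw [norm_add_smul_self w (by positivity), add_mul, one_mul, div_mul_cancel₀ _ hs.ne']
    have hden : 1 - (t - q) ^ 2 ≠ 0 := by nlinarith
    have hopt : 2 * (t - (t - q)) = (1 - (t - q) ^ 2) * (t + q) := by
      have h := two_mul_sub_sub_one_sub_sq_mul hq (t - q)
      rw [hq, sub_self, zero_pow two_ne_zero, mul_zero, sub_eq_zero] at h
      exact h
    simp only [hnorm, hsum]
    rw [div_eq_iff hden]
    linear_combination s * hopt
  · rintro _ ⟨ρ, hρ, rfl⟩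
    rw [mem_ball_zero_iff] at hρ
    have hden : 0 < 1 - ‖ρ‖ ^ 2 := by nlinarith [norm_nonneg ρ]
    have htri : ‖w + ρ‖ ^ 2 ≤ (s + ‖ρ‖) ^ 2 := by
      gcongr
      exact norm_add_le w ρ
    have hcmp : (1 - ‖ρ‖ ^ 2) * (t + q) ≤ 2 * (t - ‖ρ‖) := by
      rw [← sub_nonneg, two_mul_sub_sub_one_sub_sq_mul hq]
      positivity
    rw [le_div_iff₀ hden]
    linarith [mul_le_mul_of_nonneg_left hcmp hs.le]

theorem stmt_7 (n : ℕ) (c1 c2 : EuclideanSpace ℂ (Fin n))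
    (h : (inner ℂ c1 c2 : ℂ) ≠ 0)
    (s : ℝ) (hs : s = ‖(inner ℂ c1 c2 : ℂ)‖)
    (t : ℝ) (ht : t = ((1 + ‖c1‖ ^ 2) * (1 + ‖c2‖ ^ 2) - s ^ 2 - 1) / (2 * s))
    (ht1 : 1 < t) :
    IsLeast
      { x : ℝ | ∃ ρ : ℂ, ‖ρ‖ < 1 ∧
        x = (1 + ‖c1‖ ^ 2 - ‖(inner ℂ c1 c2 : ℂ) + ρ‖ ^ 2 / (1 + ‖c2‖ ^ 2)) / (1 - ‖ρ‖ ^ 2) }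
      ((1 + s * (t + Real.sqrt (t ^ 2 - 1))) / (1 + ‖c2‖ ^ 2)) := by
  have hB : 0 < 1 + ‖c2‖ ^ 2 := by positivity
  have hAB : (1 + ‖c1‖ ^ 2) * (1 + ‖c2‖ ^ 2) = 2 * s * t + s ^ 2 + 1 := by
    have hs0 : s ≠ 0 := hs ▸ norm_ne_zero_iff.mpr h
    rw [ht]
    field_simp
    ring
  subst hs
  -- the ascription elaborates `IsLeast` with the statement's `LE ℝ` instance, so `convert` only
  -- has to match the sets
  have hleast : IsLeast ((· / (1 + ‖c2‖ ^ 2)) '' _) _ :=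
    (monotone_div_right_of_nonneg hB.le).map_isLeast
      (isLeast_sub_norm_add_sq_div_one_sub_norm_sq h ht1)
  rw [Set.image_image] at hleast
  convert hleast using 1
  ext x
  simp only [Set.mem_image, mem_ball_zero_iff, Set.mem_ofPred_eq]
  refine exists_congr fun ρ ↦ and_congr_right fun _ ↦ ?_
  rw [eq_comm, ← hAB]
  field_simp
end
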